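/- Fix x ∈ ℝⁿ, assume every node has degree mᵢ ≥ 1 and F has full column rank. Let μ be a probability measure on ℝ concentrated on the interval (0,1), and let ρ₀ = ∫ ρ dμ(ρ) be its mean. Then ∫ T(x,ρ) dμ(ρ) ≤ T(x,ρ₀). -/

import Mathlib

open Matrix

/-- Degree of node `i`: `mᵢ = ∑ⱼ Wᵢⱼ`. -/
noncomputable def degVec {n : ℕ} (W : Matrix (Fin n) (Fin n) ℝ) (i : Fin n) : ℝ := ∑ j, W i j

/-- `R(ρ) = D - ρ W` where `D = diag(m₁,…,mₙ)`. -/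
noncomputable def Rmat {n : ℕ} (W : Matrix (Fin n) (Fin n) ℝ) (ρ : ℝ) :
    Matrix (Fin n) (Fin n) ℝ :=
  Matrix.diagonal (degVec W) - ρ • W

/-- `K(ρ) = (D-ρW) - (D-ρW)F[Fᵀ(D-ρW)F]⁻¹Fᵀ(D-ρW)`. -/
noncomputable def Kmat {n p : ℕ} (W : Matrix (Fin n) (Fin n) ℝ)
    (F : Matrix (Fin n) (Fin (p + 1)) ℝ) (ρ : ℝ) : Matrix (Fin n) (Fin n) ℝ :=
  Rmat W ρ - Rmat W ρ * F * (Fᵀ * Rmat W ρ * F)⁻¹ * Fᵀ * Rmat W ρ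

/-- `T(x,ρ) = xᵀ K(ρ) x`. -/
noncomputable def Tcrit {n p : ℕ} (W : Matrix (Fin n) (Fin n) ℝ)
    (F : Matrix (Fin n) (Fin (p + 1)) ℝ) (x : Fin n → ℝ) (ρ : ℝ) : ℝ :=
  x ⬝ᵥ (Kmat W F ρ).mulVec x

/-!
For `0 ≤ ρ < 1` the matrix `R(ρ) = D - ρW` is positive definite, because
`yᵀ R(ρ) y ≥ (1 - ρ) ∑ mᵢ yᵢ²` by `∑ Wᵢⱼ (yᵢ - yⱼ)² ≥ 0`. Then `T(x, ρ)` is the minimum over `b` of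
`(x - F b)ᵀ R(ρ) (x - F b)`, attained at the generalised least-squares coefficient, so `T(x, ·)` is
a minimum of functions affine in `ρ`. Taking the minimiser `b₀` at the mean `ρ₀` gives an affine
majorant of `T(x, ·)` that touches it at `ρ₀`; integrating it against `μ` yields `T(x, ρ₀)`.
-/

open MeasureTheory Set

namespace Matrix

section LeastSquares

variable {m k 𝕜 : Type*} [Fintype m] [Fintype k] [DecidableEq k] [CommRing 𝕜]
  {A : Matrix m m 𝕜} {F : Matrix m k 𝕜}

/-- The coefficient `b` minimising `(x - F b)ᵀ A (x - F b)` when `A` is positive definite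
(generalised least squares). -/
noncomputable def glsCoeff (A : Matrix m m 𝕜) (F : Matrix m k 𝕜) (x : m → 𝕜) : k → 𝕜 :=
  (Fᵀ * A * F)⁻¹ *ᵥ ((Fᵀ * A) *ᵥ x)

theorem transpose_mul_mulVec_sub_glsCoeff (hS : IsUnit (Fᵀ * A * F).det) (x : m → 𝕜) :
    (Fᵀ * A) *ᵥ (x - F *ᵥ glsCoeff A F x) = 0 := by
  rw [glsCoeff, mulVec_sub, mulVec_mulVec, mulVec_mulVec, mul_nonsing_inv _ hS, one_mulVec,
    sub_self]

theorem dotProduct_mulVec_sub_glsCoeff (hS : IsUnit (Fᵀ * A * F).det) (x : m → 𝕜) :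
    (x - F *ᵥ glsCoeff A F x) ⬝ᵥ A *ᵥ (x - F *ᵥ glsCoeff A F x) =
      x ⬝ᵥ (A - A * F * (Fᵀ * A * F)⁻¹ * Fᵀ * A) *ᵥ x := by
  have hres : (F *ᵥ glsCoeff A F x) ⬝ᵥ A *ᵥ (x - F *ᵥ glsCoeff A F x) = 0 := by
    rw [dotProduct_comm, ← dotProduct_transpose_mulVec, mulVec_mulVec,
      transpose_mul_mulVec_sub_glsCoeff hS, dotProduct_zero]
  rw [sub_dotProduct x, hres, sub_zero, mulVec_sub, dotProduct_sub, glsCoeff, sub_mulVec,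
    dotProduct_sub]
  simp only [mulVec_mulVec, Matrix.mul_assoc]

/-- Pythagoras: the residual at `glsCoeff` is `A`-orthogonal to the columns of `F`. -/
theorem dotProduct_mulVec_sub_mulVec_eq_add (hA : Aᵀ = A) (hS : IsUnit (Fᵀ * A * F).det)
    (x : m → 𝕜) (b : k → 𝕜) :
    (x - F *ᵥ b) ⬝ᵥ A *ᵥ (x - F *ᵥ b) =
      x ⬝ᵥ (A - A * F * (Fᵀ * A * F)⁻¹ * Fᵀ * A) *ᵥ x +
        (F *ᵥ (b - glsCoeff A F x)) ⬝ᵥ A *ᵥ (F *ᵥ (b - glsCoeff A F x)) := by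
  rw [← dotProduct_mulVec_sub_glsCoeff hS]
  set z := x - F *ᵥ glsCoeff A F x
  set w := F *ᵥ (b - glsCoeff A F x)
  have hwz : w ⬝ᵥ A *ᵥ z = 0 := by
    rw [dotProduct_comm, ← dotProduct_transpose_mulVec, mulVec_mulVec,
      transpose_mul_mulVec_sub_glsCoeff hS, dotProduct_zero]
  have hzw : z ⬝ᵥ A *ᵥ w = 0 := by
    rw [← dotProduct_transpose_mulVec, hA, hwz]
  have hsplit : x - F *ᵥ b = z - w := by
    simp only [z, w, mulVec_sub]
    abel
  rw [hsplit]
  simp only [mulVec_sub, dotProduct_sub, sub_dotProduct, hwz, hzw]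
  ring

theorem dotProduct_schur_mulVec_le [PartialOrder 𝕜] [StarRing 𝕜] [TrivialStar 𝕜]
    [IsOrderedRing 𝕜] (hA : A.PosSemidef) (hS : IsUnit (Fᵀ * A * F).det)
    (x : m → 𝕜) (b : k → 𝕜) :
    x ⬝ᵥ (A - A * F * (Fᵀ * A * F)⁻¹ * Fᵀ * A) *ᵥ x ≤ (x - F *ᵥ b) ⬝ᵥ A *ᵥ (x - F *ᵥ b) := by
  have hAsymm : Aᵀ = A := by
    simpa [conjTranspose_eq_transpose_of_trivial] using hA.isHermitian.eq
  rw [dotProduct_mulVec_sub_mulVec_eq_add hAsymm hS]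
  simpa using hA.dotProduct_mulVec_nonneg (F *ᵥ (b - glsCoeff A F x))

end LeastSquares

theorem dotProduct_diagonal_mulVec_self {m 𝕜 : Type*} [Fintype m] [DecidableEq m] [CommRing 𝕜]
    (d y : m → 𝕜) : y ⬝ᵥ diagonal d *ᵥ y = ∑ i, d i * y i ^ 2 := by
  simp only [dotProduct, mulVec_diagonal]
  exact Finset.sum_congr rfl fun i _ => by ring

theorem mulVec_injective_of_rank_eq_card {m k K : Type*} [Fintype m] [Fintype k]
    [Field K] {F : Matrix m k K} (hF : F.rank = Fintype.card k) : Function.Injective F.mulVec := by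
  have h := LinearMap.finrank_range_add_finrank_ker F.mulVecLin
  rw [← rank, hF, Module.finrank_fintype_fun_eq_card, add_eq_left,
    Submodule.finrank_eq_zero, LinearMap.ker_eq_bot] at h
  exact h

theorem isUnit_det_transpose_mul_mul {m k K : Type*} [Fintype m] [Fintype k] [DecidableEq k]
    [Field K] [PartialOrder K] [StarRing K] [TrivialStar K] {A : Matrix m m K} (hA : A.PosDef)
    {F : Matrix m k K} (hF : Function.Injective F.mulVec) : IsUnit (Fᵀ * A * F).det := by
  rw [← isUnit_iff_isUnit_det, ← conjTranspose_eq_transpose_of_trivial]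
  exact (hA.conjTranspose_mul_mul_same hF).isUnit

end Matrix

open Matrix

section Graph

variable {n : ℕ} {W : Matrix (Fin n) (Fin n) ℝ}

theorem dotProduct_Rmat_mulVec_self (ρ : ℝ) (y : Fin n → ℝ) :
    y ⬝ᵥ Rmat W ρ *ᵥ y = ∑ i, degVec W i * y i ^ 2 - ρ * (y ⬝ᵥ W *ᵥ y) := by
  rw [Rmat, sub_mulVec, dotProduct_sub, dotProduct_diagonal_mulVec_self, smul_mulVec,
    dotProduct_smul, smul_eq_mul]

theorem sum_mul_sub_sq_eq (hW : W.IsSymm) (y : Fin n → ℝ) :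
    ∑ i, ∑ j, W i j * (y i - y j) ^ 2 = 2 * (∑ i, degVec W i * y i ^ 2 - y ⬝ᵥ W *ᵥ y) := by
  have hcols : ∑ i, ∑ j, W i j * y j ^ 2 = ∑ i, degVec W i * y i ^ 2 := by
    rw [Finset.sum_comm]
    refine Finset.sum_congr rfl fun j _ => ?_
    rw [degVec, Finset.sum_mul]
    exact Finset.sum_congr rfl fun i _ => by rw [hW.apply i j]
  have hrows : ∑ i, ∑ j, W i j * y i ^ 2 = ∑ i, degVec W i * y i ^ 2 := by
    simp only [degVec, Finset.sum_mul]
  have hform : y ⬝ᵥ W *ᵥ y = ∑ i, ∑ j, W i j * (y i * y j) := by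
    simp only [dotProduct, mulVec, Finset.mul_sum]
    exact Finset.sum_congr rfl fun i _ => Finset.sum_congr rfl fun j _ => by ring
  have hexpand : ∑ i, ∑ j, W i j * (y i - y j) ^ 2 = ∑ i, ∑ j, W i j * y i ^ 2
      - 2 * ∑ i, ∑ j, W i j * (y i * y j) + ∑ i, ∑ j, W i j * y j ^ 2 := by
    simp only [Finset.mul_sum, ← Finset.sum_sub_distrib, ← Finset.sum_add_distrib]
    exact Finset.sum_congr rfl fun i _ => Finset.sum_congr rfl fun j _ => by ring
  rw [hexpand, hcols, hrows, hform]
  ring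

theorem dotProduct_mulVec_self_le (hW : W.IsSymm) (hW0 : ∀ i j, 0 ≤ W i j) (y : Fin n → ℝ) :
    y ⬝ᵥ W *ᵥ y ≤ ∑ i, degVec W i * y i ^ 2 := by
  have h : 0 ≤ ∑ i, ∑ j, W i j * (y i - y j) ^ 2 :=
    Finset.sum_nonneg fun i _ => Finset.sum_nonneg fun j _ =>
      mul_nonneg (hW0 i j) (sq_nonneg _)
  rw [sum_mul_sub_sq_eq hW] at h
  linarith

theorem posDef_Rmat (hW : W.IsSymm) (hW0 : ∀ i j, 0 ≤ W i j) (hdeg : ∀ i, 0 < degVec W i)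
    {ρ : ℝ} (hρ0 : 0 ≤ ρ) (hρ1 : ρ < 1) : (Rmat W ρ).PosDef := by
  refine .of_dotProduct_mulVec_pos ?_ fun y hy => ?_
  · rw [isHermitian_iff_isSymm, Rmat, IsSymm, transpose_sub, transpose_smul, diagonal_transpose,
      hW.eq]
  obtain ⟨i, hi⟩ := Function.ne_iff.mp hy
  have hD : 0 < ∑ i, degVec W i * y i ^ 2 :=
    Finset.sum_pos' (fun j _ => mul_nonneg (hdeg j).le (sq_nonneg _))
      ⟨i, Finset.mem_univ i, mul_pos (hdeg i) (sq_pos_of_ne_zero hi)⟩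
  have hWy := dotProduct_mulVec_self_le hW hW0 y
  rw [star_trivial, dotProduct_Rmat_mulVec_self]
  nlinarith

end Graph

section Tcrit

variable {n p : ℕ} {W : Matrix (Fin n) (Fin n) ℝ} {F : Matrix (Fin n) (Fin (p + 1)) ℝ} {ρ : ℝ}

theorem Tcrit_le_dotProduct (hR : (Rmat W ρ).PosDef) (hF : Function.Injective F.mulVec)
    (x : Fin n → ℝ) (b : Fin (p + 1) → ℝ) :
    Tcrit W F x ρ ≤ (x - F *ᵥ b) ⬝ᵥ Rmat W ρ *ᵥ (x - F *ᵥ b) :=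
  dotProduct_schur_mulVec_le hR.posSemidef (isUnit_det_transpose_mul_mul hR hF) x b

theorem Tcrit_eq_dotProduct_glsCoeff (hR : (Rmat W ρ).PosDef) (hF : Function.Injective F.mulVec)
    (x : Fin n → ℝ) :
    Tcrit W F x ρ = (x - F *ᵥ glsCoeff (Rmat W ρ) F x) ⬝ᵥ
      Rmat W ρ *ᵥ (x - F *ᵥ glsCoeff (Rmat W ρ) F x) :=
  (dotProduct_mulVec_sub_glsCoeff (isUnit_det_transpose_mul_mul hR hF) x).symm

end Tcrit

theorem MeasureTheory.integral_pos_of_ae_pos {α : Type*} [MeasurableSpace α] {μ : Measure α}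
    [NeZero μ] {g : α → ℝ} (hg : Integrable g μ) (hpos : ∀ᵐ a ∂μ, 0 < g a) : 0 < ∫ a, g a ∂μ := by
  rw [integral_pos_iff_support_of_nonneg_ae (hpos.mono fun _ h => h.le) hg]
  calc (0 : ENNReal) < μ univ := Measure.measure_univ_pos.mpr (NeZero.ne μ)
    _ ≤ μ (Function.support g) := measure_mono_ae (hpos.mono fun _ h _ => h.ne')

section Mean

variable {μ : Measure ℝ} [IsProbabilityMeasure μ]

theorem integral_id_mem_Ioo {a b : ℝ} (h : ∀ᵐ ρ ∂μ, ρ ∈ Ioo a b) (hid : Integrable id μ) :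
    ∫ ρ, ρ ∂μ ∈ Ioo a b := by
  replace hid : Integrable (fun ρ => ρ) μ := hid
  have ha := integral_pos_of_ae_pos (g := fun ρ => ρ - a) (hid.sub (integrable_const a))
    (h.mono fun ρ hρ => sub_pos.mpr hρ.1)
  have hb := integral_pos_of_ae_pos (g := fun ρ => b - ρ) ((integrable_const b).sub hid)
    (h.mono fun ρ hρ => sub_pos.mpr hρ.2)
  rw [integral_sub hid (integrable_const a)] at ha
  rw [integral_sub (integrable_const b) hid] at hb
  simp only [integral_const, probReal_univ, one_smul] at ha hb
  exact ⟨by linarith, by linarith⟩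

theorem integral_le_of_ae_le_affine {f : ℝ → ℝ} (hf : Integrable f μ) (hid : Integrable id μ)
    {a c : ℝ} (h : ∀ᵐ ρ ∂μ, f ρ ≤ a - ρ * c) : ∫ ρ, f ρ ∂μ ≤ a - (∫ ρ, ρ ∂μ) * c := by
  replace hid : Integrable (fun ρ => ρ) μ := hid
  have hg : Integrable (fun ρ => a - ρ * c) μ := (integrable_const a).sub (hid.mul_const c)
  calc ∫ ρ, f ρ ∂μ ≤ ∫ ρ, (a - ρ * c) ∂μ := integral_mono_ae hf hg h
    _ = a - (∫ ρ, ρ ∂μ) * c := by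
      rw [integral_sub (integrable_const a) (hid.mul_const c), integral_mul_const]
      simp

end Mean

theorem integral_T_le_T_mean_general {n p : ℕ} (W : Matrix (Fin n) (Fin n) ℝ)
    (hWsymm : W.IsSymm) (hW01 : ∀ i j, W i j = 0 ∨ W i j = 1)
    (hdeg : ∀ i, 1 ≤ degVec W i)
    (F : Matrix (Fin n) (Fin (p + 1)) ℝ) (hF : F.rank = p + 1)
    (x : Fin n → ℝ)
    (μ : MeasureTheory.Measure ℝ) [MeasureTheory.IsProbabilityMeasure μ]
    (hsupp : ∀ᵐ ρ ∂μ, ρ ∈ Set.Ioo (0 : ℝ) 1)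
    (hint : MeasureTheory.Integrable (fun ρ => Tcrit W F x ρ) μ)
    (hintid : MeasureTheory.Integrable id μ) :
    ∫ ρ, Tcrit W F x ρ ∂μ ≤ Tcrit W F x (∫ ρ, ρ ∂μ) := by
  have hW0 : ∀ i j, 0 ≤ W i j := fun i j => by rcases hW01 i j with h | h <;> simp [h]
  have hR : ∀ ρ ∈ Ioo (0 : ℝ) 1, (Rmat W ρ).PosDef := fun ρ hρ =>
    posDef_Rmat hWsymm hW0 (fun i => one_pos.trans_le (hdeg i)) hρ.1.le hρ.2
  have hFinj : Function.Injective F.mulVec := mulVec_injective_of_rank_eq_card (by simpa using hF)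
  set ρ₀ := ∫ ρ, ρ ∂μ
  have hρ₀ : ρ₀ ∈ Ioo 0 1 := integral_id_mem_Ioo hsupp hintid
  set y := x - F *ᵥ glsCoeff (Rmat W ρ₀) F x
  calc ∫ ρ, Tcrit W F x ρ ∂μ ≤ ∑ i, degVec W i * y i ^ 2 - ρ₀ * (y ⬝ᵥ W *ᵥ y) := by
        refine integral_le_of_ae_le_affine hint hintid (hsupp.mono fun ρ hρ => ?_)
        rw [← dotProduct_Rmat_mulVec_self]
        exact Tcrit_le_dotProduct (hR ρ hρ) hFinj x _
    _ = Tcrit W F x ρ₀ := by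
        rw [← dotProduct_Rmat_mulVec_self, Tcrit_eq_dotProduct_glsCoeff (hR ρ₀ hρ₀) hFinj]

/-- for a probability measure `μ` concentrated on `(0,1)` with mean `ρ₀`,
`∫ T(x,ρ) dμ(ρ) ≤ T(x,ρ₀)`. -/
theorem integral_T_le_T_mean {n p : ℕ} (W : Matrix (Fin n) (Fin n) ℝ)
    (hWsymm : W.IsSymm) (hW01 : ∀ i j, W i j = 0 ∨ W i j = 1) (hWdiag : ∀ i, W i i = 0)
    (hdeg : ∀ i, 1 ≤ degVec W i)
    (F : Matrix (Fin n) (Fin (p + 1)) ℝ) (hF : F.rank = p + 1)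
    (x : Fin n → ℝ)
    (μ : MeasureTheory.Measure ℝ) [MeasureTheory.IsProbabilityMeasure μ]
    (hsupp : ∀ᵐ ρ ∂μ, ρ ∈ Set.Ioo (0 : ℝ) 1)
    (hint : MeasureTheory.Integrable (fun ρ => Tcrit W F x ρ) μ)
    (hintid : MeasureTheory.Integrable id μ) :
    ∫ ρ, Tcrit W F x ρ ∂μ ≤ Tcrit W F x (∫ ρ, ρ ∂μ) :=
  integral_T_le_T_mean_general W hWsymm hW01 hdeg F hF x μ hsupp hint hintid
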